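/- For all natural numbers a, b, d, n, p, we have ∑_{k=0}^{n} C(a,k)·C(b,n−k)·C(p+k, a+b−d)·C(n−k,d) = C(n+p−b, n−d)·C(p, a+b−n)·C(b,d). -/

import Mathlib

/-!
Trinomial revision `C(b,n-k) C(n-k,d) = C(b,d) C(b-d,n-d-k)` pulls out the factor `C(b,d)`.
Expanding `C(p+k, a+b-d) = ∑ᵢ C(k,i) C(p,a+b-d-i)` by Vandermonde and swapping the sums, a
second trinomial revision and Vandermonde collapse the sum over `k` to `C(a,i) C(a+b-d-i, n-d-i)`.
Two more revisions turn `C(p, a+b-d-i) C(a+b-d-i, n-d-i)` into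
`C(p, a+b-n) C(p+n-a-b, n-d-i)`, and a last Vandermonde sums over `i`.
-/

/-- Binomial coefficient for integers: `C x y` is the usual binomial coefficient
when `0 ≤ y ≤ x`, and `0` otherwise. -/
def C (x y : ℤ) : ℤ := if 0 ≤ y ∧ y ≤ x then (x.toNat.choose y.toNat : ℤ) else 0

open Finset

lemma C_of_neg {x y : ℤ} (h : y < 0) : C x y = 0 := by
  simp [C, h.not_ge]

lemma C_of_lt {x y : ℤ} (h : x < y) : C x y = 0 := by
  simp [C, h.not_ge]

lemma C_natCast (n k : ℕ) : C n k = n.choose k := by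
  by_cases h : k ≤ n
  · simp [C, h]
  · simp [C, h, Nat.choose_eq_zero_of_lt (not_le.mp h)]

lemma C_symm (x y : ℤ) : C x (x - y) = C x y := by
  unfold C
  by_cases h : 0 ≤ y ∧ y ≤ x
  · rw [if_pos h, if_pos (by omega), show (x - y).toNat = x.toNat - y.toNat by omega,
      Nat.choose_symm (by omega)]
  · rw [if_neg h, if_neg (by omega)]

lemma C_mul_C (x y z : ℤ) : C x y * C y z = C x z * C (x - z) (y - z) := by
  unfold C
  by_cases hz : 0 ≤ z ∧ z ≤ y
  · by_cases hy : 0 ≤ y ∧ y ≤ x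
    · rw [if_pos hy, if_pos hz, if_pos (by omega), if_pos (by omega),
        show (x - z).toNat = x.toNat - z.toNat by omega,
        show (y - z).toNat = y.toNat - z.toNat by omega]
      exact_mod_cast Nat.choose_mul (by omega)
    · rw [if_neg hy, if_neg (show ¬(0 ≤ y - z ∧ y - z ≤ x - z) by omega)]; ring
  · rw [if_neg hz]
    by_cases hz0 : z < 0
    · rw [if_neg (show ¬(0 ≤ z ∧ z ≤ x) by omega)]; ring
    · rw [if_neg (show ¬(0 ≤ y - z ∧ y - z ≤ x - z) by omega)]; ring

lemma C_mul_C' (x y z : ℤ) : C x y * C y z = C x (y - z) * C (x - (y - z)) z := by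
  rw [← C_symm y z, C_mul_C, sub_sub_cancel]

lemma sum_C_mul_C {x y : ℤ} (hx : 0 ≤ x) (hy : 0 ≤ y) {N : ℕ} (hN : x < N) (t : ℤ) :
    ∑ k ∈ range N, C x k * C y (t - k) = C (x + y) t := by
  lift x to ℕ using hx
  lift y to ℕ using hy
  rcases lt_or_ge t 0 with ht | ht
  · rw [C_of_neg ht]
    exact sum_eq_zero fun k _ => by rw [C_of_neg (show t - k < 0 by omega), mul_zero]
  lift t to ℕ using ht
  have hxk : ∀ k ≥ N, C x k * C y (t - k) = 0 := fun k hk => by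
    rw [C_of_lt (by omega), zero_mul]
  have hyk : ∀ k ≥ t + 1, C x k * C y (t - k) = 0 := fun k hk => by
    rw [C_of_neg (show (t : ℤ) - k < 0 by omega), mul_zero]
  rw [← eventually_constant_sum hxk (le_add_right le_rfl : N ≤ N + (t + 1)),
    add_comm N, eventually_constant_sum hyk (le_add_right le_rfl), ← Nat.cast_add, C_natCast,
    Nat.add_choose_eq, Nat.sum_antidiagonal_eq_sum_range_succ_mk, Nat.cast_sum]
  refine sum_congr rfl fun k hk => ?_
  rw [mem_range] at hk
  rw [show (t : ℤ) - k = ((t - k : ℕ) : ℤ) by omega, C_natCast, C_natCast, Nat.cast_mul]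

lemma sum_C_sub_mul_C {x y : ℤ} (hx : 0 ≤ x) (hy : 0 ≤ y) {N i : ℕ} (hN : i + x < N)
    (t : ℤ) : ∑ k ∈ range N, C x (k - i) * C y (t - k) = C (x + y) (t - i) := by
  have hlow : ∀ k ∈ range i, C x (k - i) * C y (t - k) = 0 := fun k hk => by
    rw [mem_range] at hk
    rw [C_of_neg (by omega), zero_mul]
  rw [← sum_range_add_sum_Ico _ (by omega : i ≤ N), sum_eq_zero hlow, zero_add,
    sum_Ico_eq_sum_range, ← sum_C_mul_C hx hy (by omega : x < (N - i : ℕ))]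
  refine sum_congr rfl fun k _ => ?_
  push_cast
  ring_nf

lemma sum_C_mul_C_mul_C {a e : ℤ} (he : 0 ≤ e) {N : ℕ} (hN : a < N) (i : ℕ)
    (m : ℤ) : ∑ k ∈ range N, C a k * C k i * C e (m - k) = C a i * C (a + e - i) (m - i) := by
  simp_rw [C_mul_C a, mul_assoc, ← mul_sum]
  rcases le_or_gt (i : ℤ) a with hi | hi
  · rw [sum_C_sub_mul_C (sub_nonneg.mpr hi) he (by omega), sub_add_eq_add_sub]
  · rw [C_of_lt hi, zero_mul, zero_mul]

lemma sum_C_mul_C_mul_C_add {a e p : ℤ} (ha : 0 ≤ a) (he : 0 ≤ e) (hp : 0 ≤ p) {N : ℕ}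
    (hN : a < N) (m : ℤ) :
    ∑ k ∈ range N, C a k * C e (m - k) * C (p + k) (a + e) = C (m + p - e) m * C p (a + e - m) := by
  calc ∑ k ∈ range N, C a k * C e (m - k) * C (p + k) (a + e)
      = ∑ k ∈ range N, ∑ i ∈ range N, C p (a + e - i) * (C a k * C k i * C e (m - k)) := by
        refine sum_congr rfl fun k hk => ?_
        rw [add_comm p, ← sum_C_mul_C k.cast_nonneg hp (by simpa using hk), mul_sum]
        exact sum_congr rfl fun i _ => by ring
    _ = ∑ i ∈ range N, C p (a + e - i) * (C a i * C (a + e - i) (m - i)) := by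
        rw [sum_comm]
        simp_rw [← mul_sum, sum_C_mul_C_mul_C he hN]
    _ = ∑ i ∈ range N, C p (a + e - m) * (C a i * C (p + m - a - e) (m - i)) := by
        refine sum_congr rfl fun i _ => ?_
        have h := C_mul_C' p (a + e - i) (m - i)
        rw [show a + e - i - (m - i) = a + e - m by ring,
          show p - (a + e - m) = p + m - a - e by ring] at h
        linear_combination C a i * h
    _ = C (m + p - e) m * C p (a + e - m) := by
        rw [← mul_sum, mul_comm]
        rcases le_or_gt 0 (p + m - a - e) with hq | hq
        · rw [sum_C_mul_C ha hq hN, show a + (p + m - a - e) = m + p - e by ring]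
        · rw [C_of_lt (by omega : p < a + e - m), mul_zero, mul_zero]

theorem stmt_5 (a b d n p : ℕ) :
    ∑ k ∈ Finset.range (n + 1), C a k * C b ((n : ℤ) - k) * C ((p : ℤ) + k) ((a : ℤ) + b - d) * C ((n : ℤ) - k) d = C ((n : ℤ) + p - b) ((n : ℤ) - d) * C p ((a : ℤ) + b - n) * C b d := by
  have hvanish : ∀ k ≥ n + 1,
      C a k * C b ((n : ℤ) - k) * C ((p : ℤ) + k) ((a : ℤ) + b - d) * C ((n : ℤ) - k) d = 0 :=
    fun k hk => by rw [C_of_neg (show (n : ℤ) - k < 0 by omega)]; ring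
  have hfactor : ∀ k : ℕ,
      C a k * C b ((n : ℤ) - k) * C ((p : ℤ) + k) ((a : ℤ) + b - d) * C ((n : ℤ) - k) d =
        C b d * (C a k * C ((b : ℤ) - d) ((n : ℤ) - d - k) * C ((p : ℤ) + k) ((a : ℤ) + b - d)) :=
    fun k => by
      have h := C_mul_C b (n - k) d
      rw [sub_right_comm] at h
      linear_combination (C a k * C ((p : ℤ) + k) ((a : ℤ) + b - d)) * h
  rw [← eventually_constant_sum hvanish (le_add_right le_rfl : n + 1 ≤ n + 1 + a),
    sum_congr rfl fun k _ => hfactor k, ← mul_sum]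
  rcases le_or_gt d b with hdb | hdb
  · have h := sum_C_mul_C_mul_C_add (a := a) (e := (b : ℤ) - d) (p := p) (by positivity)
      (by omega) (by positivity) (N := n + 1 + a) (by omega) (n - d)
    rw [show (a : ℤ) + (b - d) = a + b - d by ring, show (n : ℤ) - d + p - (b - d) = n + p - b by ring,
      show (a : ℤ) + b - d - (n - d) = a + b - n by ring] at h
    rw [h, mul_comm]
  · rw [C_of_lt (by exact_mod_cast hdb : (b : ℤ) < d), zero_mul, mul_zero]
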